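/- arXiv:math/0412533 — 4 statements merged into one kernel-verified Lean document; each statement's English description precedes it below -/
import Mathlib

section
/- Let K : ℕ → ℤ be the sequence of Kontsevich numbers, defined by K(1) = 1 and, for d ≥ 2, K(d) = Σ_{d₁+d₂=d, d₁≥1, d₂≥1} K(d₁)·K(d₂)·( d₁²·d₂²·C(3d−4, 3d₁−2) − d₁³·d₂·C(3d−4, 3d₁−1) ), where C(m, j) denotes the binomial coefficient. Then K(d) ≥ 1 for every d ≥ 1. -/
lemma key_choose (a' b' : ℕ) :
    1 ≤ 2 * ((a':ℤ)+1)^2 * ((b':ℤ)+1)^2 * (Nat.choose (3*a'+3*b'+2) (3*a'+1) : ℤ)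
        - ((a':ℤ)+1)^3 * ((b':ℤ)+1) * (Nat.choose (3*a'+3*b'+2) (3*a'+2) : ℤ)
        - ((a':ℤ)+1) * ((b':ℤ)+1)^3 * (Nat.choose (3*a'+3*b'+2) (3*a') : ℤ) := by
  set n := 3*a'+3*b'+2 with hn
  have h1 : Nat.choose n (3*a'+2) * (3*a'+2) = Nat.choose n (3*a'+1) * (3*b'+1) := by
    have := Nat.choose_succ_right_eq n (3*a'+1)
    rwa [show n - (3*a'+1) = 3*b'+1 by omega] at this
  have h2 : Nat.choose n (3*a'+1) * (3*a'+1) = Nat.choose n (3*a') * (3*b'+2) := by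
    have := Nat.choose_succ_right_eq n (3*a')
    rwa [show n - 3*a' = 3*b'+2 by omega] at this
  have hYpos : (1:ℤ) ≤ (Nat.choose n (3*a'+1) : ℤ) := by
    exact_mod_cast Nat.choose_pos (show 3*a'+1 ≤ n by omega)
  have hXpos : (0:ℤ) ≤ (Nat.choose n (3*a') : ℤ) := by positivity
  have hZpos : (0:ℤ) ≤ (Nat.choose n (3*a'+2) : ℤ) := by positivity
  have h1' : (Nat.choose n (3*a'+2) : ℤ) * (3*a'+2) = (Nat.choose n (3*a'+1) : ℤ) * (3*b'+1) := by
    exact_mod_cast h1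
  have h2' : (Nat.choose n (3*a'+1) : ℤ) * (3*a'+1) = (Nat.choose n (3*a') : ℤ) * (3*b'+2) := by
    exact_mod_cast h2
  set A : ℤ := (a':ℤ) + 1 with hA
  set B : ℤ := (b':ℤ) + 1 with hB
  set X : ℤ := (Nat.choose n (3*a') : ℤ)
  set Y : ℤ := (Nat.choose n (3*a'+1) : ℤ)
  set Z : ℤ := (Nat.choose n (3*a'+2) : ℤ)
  have hA1 : 1 ≤ A := by simp [hA]
  have hB1 : 1 ≤ B := by simp [hB]
  have h1'' : Z * (3*A - 1) = Y * (3*B - 2) := by rw [hA, hB]; linarith [h1']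
  have h2'' : Y * (3*A - 2) = X * (3*B - 1) := by rw [hA, hB]; linarith [h2']
  have key : (2*A^2*B^2*Y - A^3*B*Z - A*B^3*X) * ((3*A-1)*(3*B-1))
      = Y * (A*B*(A^2*(3*B-2) + B^2*(3*A-2) + 2*A*B)) := by
    linear_combination (-(A^3*B*(3*B-1))) * h1'' + (A*B^3*(3*A-1)) * h2''
  have hA0 : (0:ℤ) ≤ A := by linarith
  have hB0 : (0:ℤ) ≤ B := by linarith
  have hAB : (1:ℤ) ≤ A * B := by
    have := mul_le_mul hA1 hB1 zero_le_one hA0; linarith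
  have hA2 : (1:ℤ) ≤ A^2 := by nlinarith
  have hB2 : (1:ℤ) ≤ B^2 := by nlinarith
  have t1 : (1:ℤ) ≤ A^2*(3*B-2) := by
    have := mul_le_mul hA2 (show (1:ℤ) ≤ 3*B-2 by linarith) zero_le_one (by positivity)
    linarith
  have t2 : (1:ℤ) ≤ B^2*(3*A-2) := by
    have := mul_le_mul hB2 (show (1:ℤ) ≤ 3*A-2 by linarith) zero_le_one (by positivity)
    linarith
  have hQ : (1:ℤ) ≤ A^2*(3*B-2) + B^2*(3*A-2) + 2*A*B := by linarith
  have hPpos : (1:ℤ) ≤ A*B*(A^2*(3*B-2) + B^2*(3*A-2) + 2*A*B) := by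
    have := mul_le_mul hAB hQ zero_le_one (by linarith : (0:ℤ) ≤ A*B)
    linarith
  have hprod : (1:ℤ) ≤ (2*A^2*B^2*Y - A^3*B*Z - A*B^3*X) * ((3*A-1)*(3*B-1)) := by
    rw [key]
    have := mul_le_mul hYpos hPpos zero_le_one (by linarith : (0:ℤ) ≤ Y)
    linarith
  by_contra hcon
  push_neg at hcon
  have hS : 2*A^2*B^2*Y - A^3*B*Z - A*B^3*X ≤ 0 := by linarith
  have hc : (0:ℤ) ≤ (3*A-1)*(3*B-1) := by
    have := mul_le_mul (show (1:ℤ) ≤ 3*A-1 by linarith) (show (1:ℤ) ≤ 3*B-1 by linarith) zero_le_one (by linarith)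
    linarith
  have := mul_nonpos_of_nonpos_of_nonneg hS hc
  linarith

lemma term_ge (a' b' : ℕ) (x y : ℤ) (hx : 1 ≤ x) (hy : 1 ≤ y) :
    1 ≤ x * y * ((((a'+1:ℕ)):ℤ)^2 * (((b'+1:ℕ)):ℤ)^2 * (Nat.choose (3*a'+3*b'+2) (3*a'+1) : ℤ)
          - (((a'+1:ℕ)):ℤ)^3 * (((b'+1:ℕ)):ℤ) * (Nat.choose (3*a'+3*b'+2) (3*a'+2) : ℤ))
      + y * x * ((((b'+1:ℕ)):ℤ)^2 * (((a'+1:ℕ)):ℤ)^2 * (Nat.choose (3*a'+3*b'+2) (3*b'+1) : ℤ)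
          - (((b'+1:ℕ)):ℤ)^3 * (((a'+1:ℕ)):ℤ) * (Nat.choose (3*a'+3*b'+2) (3*b'+2) : ℤ)) := by
  have e1 : Nat.choose (3*a'+3*b'+2) (3*b'+1) = Nat.choose (3*a'+3*b'+2) (3*a'+1) := by
    have := Nat.choose_symm (show 3*a'+1 ≤ 3*a'+3*b'+2 by omega)
    rwa [show 3*a'+3*b'+2 - (3*a'+1) = 3*b'+1 by omega] at this
  have e2 : Nat.choose (3*a'+3*b'+2) (3*b'+2) = Nat.choose (3*a'+3*b'+2) (3*a') := by
    have := Nat.choose_symm (show 3*a' ≤ 3*a'+3*b'+2 by omega)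
    rwa [show 3*a'+3*b'+2 - 3*a' = 3*b'+2 by omega] at this
  rw [e1, e2]
  have hkey := key_choose a' b'
  have hxy : (1:ℤ) ≤ x * y := by
    have := mul_le_mul hx hy zero_le_one (by linarith); linarith
  set S : ℤ := 2 * ((a':ℤ)+1)^2 * ((b':ℤ)+1)^2 * (Nat.choose (3*a'+3*b'+2) (3*a'+1) : ℤ)
        - ((a':ℤ)+1)^3 * ((b':ℤ)+1) * (Nat.choose (3*a'+3*b'+2) (3*a'+2) : ℤ)
        - ((a':ℤ)+1) * ((b':ℤ)+1)^3 * (Nat.choose (3*a'+3*b'+2) (3*a') : ℤ) with hS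
  have hgoal : x * y * ((((a'+1:ℕ)):ℤ)^2 * (((b'+1:ℕ)):ℤ)^2 * (Nat.choose (3*a'+3*b'+2) (3*a'+1) : ℤ)
          - (((a'+1:ℕ)):ℤ)^3 * (((b'+1:ℕ)):ℤ) * (Nat.choose (3*a'+3*b'+2) (3*a'+2) : ℤ))
      + y * x * ((((b'+1:ℕ)):ℤ)^2 * (((a'+1:ℕ)):ℤ)^2 * (Nat.choose (3*a'+3*b'+2) (3*a'+1) : ℤ)
          - (((b'+1:ℕ)):ℤ)^3 * (((a'+1:ℕ)):ℤ) * (Nat.choose (3*a'+3*b'+2) (3*a') : ℤ))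
      = (x*y) * S := by rw [hS]; push_cast; ring
  rw [hgoal]
  have := mul_le_mul hxy hkey zero_le_one (by linarith)
  rw [hS] at this ⊢
  linarith

/-- If `K : ℕ → ℤ` is the sequence of Kontsevich numbers, i.e.
`K 1 = 1` and for `d ≥ 2`,
`K d = Σ_{d₁+d₂=d, d₁,d₂ ≥ 1} K d₁ * K d₂ *
  (d₁² d₂² C(3d-4, 3d₁-2) - d₁³ d₂ C(3d-4, 3d₁-1))`,
then `K d ≥ 1` for every `d ≥ 1`. -/
theorem kontsevich_numbers_pos
    (K : ℕ → ℤ)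
    (hK1 : K 1 = 1)
    (hKrec : ∀ d : ℕ, 2 ≤ d →
      K d = ∑ d₁ ∈ Finset.Ioo 0 d,
        K d₁ * K (d - d₁) *
          ((d₁ : ℤ)^2 * ((d - d₁ : ℕ) : ℤ)^2 * (Nat.choose (3*d - 4) (3*d₁ - 2) : ℤ)
            - (d₁ : ℤ)^3 * ((d - d₁ : ℕ) : ℤ) * (Nat.choose (3*d - 4) (3*d₁ - 1) : ℤ))) :
    ∀ d : ℕ, 1 ≤ d → 1 ≤ K d := by
  intro d
  induction d using Nat.strong_induction_on with
  | _ d ih =>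
    intro hd
    rcases eq_or_lt_of_le hd with h1 | h2
    · rw [← h1, hK1]
    · have hd2 : 2 ≤ d := h2
      set f : ℕ → ℤ := fun d₁ =>
        K d₁ * K (d - d₁) *
          ((d₁ : ℤ)^2 * ((d - d₁ : ℕ) : ℤ)^2 * (Nat.choose (3*d - 4) (3*d₁ - 2) : ℤ)
            - (d₁ : ℤ)^3 * ((d - d₁ : ℕ) : ℤ) * (Nat.choose (3*d - 4) (3*d₁ - 1) : ℤ)) with hf
      have hrec : K d = ∑ a ∈ Finset.Ioo 0 d, f a := hKrec d hd2
      have hrefl : ∑ a ∈ Finset.Ioo 0 d, f (d - a) = ∑ a ∈ Finset.Ioo 0 d, f a := by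
        apply Finset.sum_nbij' (fun a => d - a) (fun a => d - a)
        · intro a ha; simp only [Finset.mem_Ioo] at ha ⊢; omega
        · intro a ha; simp only [Finset.mem_Ioo] at ha ⊢; omega
        · intro a ha; simp only [Finset.mem_Ioo] at ha; omega
        · intro a ha; simp only [Finset.mem_Ioo] at ha; omega
        · intro a ha; rfl
      have h2K : 2 * K d = ∑ a ∈ Finset.Ioo 0 d, (f a + f (d - a)) := by
        rw [Finset.sum_add_distrib, hrefl, ← hrec]; ring
      have hterm : ∀ a ∈ Finset.Ioo 0 d, (1:ℤ) ≤ f a + f (d - a) := by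
        intro a ha
        simp only [Finset.mem_Ioo] at ha
        obtain ⟨a', rfl⟩ : ∃ a', a = a' + 1 := ⟨a - 1, by omega⟩
        obtain ⟨b', rfl⟩ : ∃ b', d = a' + 1 + (b' + 1) := ⟨d - a' - 2, by omega⟩
        have hx : 1 ≤ K (a' + 1) := ih (a' + 1) (by omega) (by omega)
        have hy : 1 ≤ K (b' + 1) := ih (b' + 1) (by omega) (by omega)
        have hfa : f (a' + 1) = K (a'+1) * K (b'+1) *
            ((((a'+1:ℕ)):ℤ)^2 * (((b'+1:ℕ)):ℤ)^2 * (Nat.choose (3*a'+3*b'+2) (3*a'+1) : ℤ)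
              - (((a'+1:ℕ)):ℤ)^3 * (((b'+1:ℕ)):ℤ) * (Nat.choose (3*a'+3*b'+2) (3*a'+2) : ℤ)) := by
          rw [hf]
          simp only [show a' + 1 + (b' + 1) - (a' + 1) = b' + 1 by omega,
            show 3*(a' + 1 + (b' + 1)) - 4 = 3*a'+3*b'+2 by omega,
            show 3*(a'+1) - 2 = 3*a'+1 by omega,
            show 3*(a'+1) - 1 = 3*a'+2 by omega]
        have hfb : f (a' + 1 + (b' + 1) - (a' + 1)) = K (b'+1) * K (a'+1) *
            ((((b'+1:ℕ)):ℤ)^2 * (((a'+1:ℕ)):ℤ)^2 * (Nat.choose (3*a'+3*b'+2) (3*b'+1) : ℤ)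
              - (((b'+1:ℕ)):ℤ)^3 * (((a'+1:ℕ)):ℤ) * (Nat.choose (3*a'+3*b'+2) (3*b'+2) : ℤ)) := by
          rw [show a' + 1 + (b' + 1) - (a' + 1) = b' + 1 by omega, hf]
          simp only [show a' + 1 + (b' + 1) - (b' + 1) = a' + 1 by omega,
            show 3*(a' + 1 + (b' + 1)) - 4 = 3*a'+3*b'+2 by omega,
            show 3*(b'+1) - 2 = 3*b'+1 by omega,
            show 3*(b'+1) - 1 = 3*b'+2 by omega]
        rw [hfa, hfb]
        exact term_ge a' b' (K (a'+1)) (K (b'+1)) hx hy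
      have hsum : (1:ℤ) ≤ ∑ a ∈ Finset.Ioo 0 d, (f a + f (d - a)) := by
        have hcard := Finset.card_nsmul_le_sum (Finset.Ioo 0 d) (fun a => f a + f (d - a)) 1 hterm
        have hc : (Finset.Ioo 0 d).card = d - 1 := by simp [Nat.card_Ioo]
        rw [hc] at hcard
        have : ((d - 1 : ℕ) : ℤ) ≤ ∑ a ∈ Finset.Ioo 0 d, (f a + f (d - a)) := by
          simpa [nsmul_eq_mul] using hcard
        have hd1 : (1:ℤ) ≤ ((d - 1 : ℕ) : ℤ) := by exact_mod_cast (by omega : 1 ≤ d - 1)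
        linarith
      rw [← h2K] at hsum
      omega
end

section
/- Let K : ℕ → ℤ be the sequence of Kontsevich numbers, defined by K(1) = 1 and, for d ≥ 2, K(d) = Σ_{d₁+d₂=d, d₁≥1, d₂≥1} K(d₁)·K(d₂)·( d₁²·d₂²·C(3d−4, 3d₁−2) − d₁³·d₂·C(3d−4, 3d₁−1) ). Then there exists a constant C > 0 such that for all n ≥ 1, log K(n) ≤ 3·n·log n + C·n. -/
open Nat Finset

private lemma keyA' (e₁ e₂ : ℕ) :
    (3*(e₁+1))! * (3*(e₂+1))! *
      ((e₁+1)^2*(e₂+1)^2 * Nat.choose (3*e₁+3*e₂+2) (3*e₁+1)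
        + (e₁+1)^3*(e₂+1) * Nat.choose (3*e₁+3*e₂+2) (3*e₁+2)) * (e₁+e₂+2)^4
    ≤ 32 * (3*(e₁+e₂+2))! * ((e₁+1)^4 * (e₂+1)^4) := by
  have h1 : Nat.choose (3*e₁+3*e₂+2) (3*e₁+1) * (3*e₁+1)! * (3*e₂+1)! = (3*e₁+3*e₂+2)! := by
    have := Nat.choose_mul_factorial_mul_factorial (n := 3*e₁+3*e₂+2) (k := 3*e₁+1) (by omega)
    have e : 3*e₁+3*e₂+2 - (3*e₁+1) = 3*e₂+1 := by omega
    rwa [e] at this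
  have h2 : Nat.choose (3*e₁+3*e₂+2) (3*e₁+2) * (3*e₁+2)! * (3*e₂)! = (3*e₁+3*e₂+2)! := by
    have := Nat.choose_mul_factorial_mul_factorial (n := 3*e₁+3*e₂+2) (k := 3*e₁+2) (by omega)
    have e : 3*e₁+3*e₂+2 - (3*e₁+2) = 3*e₂ := by omega
    rwa [e] at this
  have f1 : (3*(e₁+1))! = (3*e₁+3)*((3*e₁+2)*(3*e₁+1)!) := by
    have h : 3*(e₁+1) = (3*e₁+2)+1 := by ring
    rw [h, Nat.factorial_succ]
    have h' : 3*e₁+2 = (3*e₁+1)+1 := by ring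
    rw [h', Nat.factorial_succ]
  have f1' : (3*(e₁+1))! = (3*e₁+3)*(3*e₁+2)! := by
    have h : 3*(e₁+1) = (3*e₁+2)+1 := by ring
    rw [h, Nat.factorial_succ]
  have f2 : (3*(e₂+1))! = (3*e₂+3)*((3*e₂+2)*(3*e₂+1)!) := by
    have h : 3*(e₂+1) = (3*e₂+2)+1 := by ring
    rw [h, Nat.factorial_succ]
    have h' : 3*e₂+2 = (3*e₂+1)+1 := by ring
    rw [h', Nat.factorial_succ]
  have f2' : (3*(e₂+1))! = (3*e₂+3)*((3*e₂+2)*((3*e₂+1)*(3*e₂)!)) := by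
    rw [f2]
    have h : (3*e₂+1)! = (3*e₂+1)*(3*e₂)! := Nat.factorial_succ _
    rw [h]
  have fd : (3*(e₁+e₂+2))! = (3*e₁+3*e₂+6)*((3*e₁+3*e₂+5)*((3*e₁+3*e₂+4)*((3*e₁+3*e₂+3)*(3*e₁+3*e₂+2)!))) := by
    have h : 3*(e₁+e₂+2) = (3*e₁+3*e₂+5)+1 := by ring
    rw [h, Nat.factorial_succ]
    have h2 : 3*e₁+3*e₂+5 = (3*e₁+3*e₂+4)+1 := by ring
    rw [h2, Nat.factorial_succ]
    have h3 : 3*e₁+3*e₂+4 = (3*e₁+3*e₂+3)+1 := by ring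
    rw [h3, Nat.factorial_succ]
    have h4 : 3*e₁+3*e₂+3 = (3*e₁+3*e₂+2)+1 := by ring
    rw [h4, Nat.factorial_succ]
  have hL : (3*(e₁+1))! * (3*(e₂+1))! *
      ((e₁+1)^2*(e₂+1)^2 * Nat.choose (3*e₁+3*e₂+2) (3*e₁+1)
        + (e₁+1)^3*(e₂+1) * Nat.choose (3*e₁+3*e₂+2) (3*e₁+2)) * (e₁+e₂+2)^4
      = ((e₁+1)^2*(e₂+1)^2*((3*e₁+3)*(3*e₁+2)*((3*e₂+3)*(3*e₂+2)))*(e₁+e₂+2)^4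
         + (e₁+1)^3*(e₂+1)*((3*e₁+3)*((3*e₂+3)*(3*e₂+2)*(3*e₂+1)))*(e₁+e₂+2)^4)
        * (3*e₁+3*e₂+2)! := by
    have hA : (3*(e₁+1))! * (3*(e₂+1))! * Nat.choose (3*e₁+3*e₂+2) (3*e₁+1)
        = (3*e₁+3)*(3*e₁+2)*((3*e₂+3)*(3*e₂+2)) * (3*e₁+3*e₂+2)! := by
      rw [f1, f2]
      calc (3*e₁+3)*((3*e₁+2)*(3*e₁+1)!) * ((3*e₂+3)*((3*e₂+2)*(3*e₂+1)!)) * Nat.choose (3*e₁+3*e₂+2) (3*e₁+1)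
          = (3*e₁+3)*(3*e₁+2)*((3*e₂+3)*(3*e₂+2)) * (Nat.choose (3*e₁+3*e₂+2) (3*e₁+1) * (3*e₁+1)! * (3*e₂+1)!) := by ring
        _ = _ := by rw [h1]
    have hB : (3*(e₁+1))! * (3*(e₂+1))! * Nat.choose (3*e₁+3*e₂+2) (3*e₁+2)
        = (3*e₁+3)*((3*e₂+3)*(3*e₂+2)*(3*e₂+1)) * (3*e₁+3*e₂+2)! := by
      rw [f1', f2']
      calc (3*e₁+3)*(3*e₁+2)! * ((3*e₂+3)*((3*e₂+2)*((3*e₂+1)*(3*e₂)!))) * Nat.choose (3*e₁+3*e₂+2) (3*e₁+2)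
          = (3*e₁+3)*((3*e₂+3)*(3*e₂+2)*(3*e₂+1)) * (Nat.choose (3*e₁+3*e₂+2) (3*e₁+2) * (3*e₁+2)! * (3*e₂)!) := by ring
        _ = _ := by rw [h2]
    calc (3*(e₁+1))! * (3*(e₂+1))! *
        ((e₁+1)^2*(e₂+1)^2 * Nat.choose (3*e₁+3*e₂+2) (3*e₁+1)
          + (e₁+1)^3*(e₂+1) * Nat.choose (3*e₁+3*e₂+2) (3*e₁+2)) * (e₁+e₂+2)^4
        = (e₁+1)^2*(e₂+1)^2*(e₁+e₂+2)^4 * ((3*(e₁+1))! * (3*(e₂+1))! * Nat.choose (3*e₁+3*e₂+2) (3*e₁+1))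
          + (e₁+1)^3*(e₂+1)*(e₁+e₂+2)^4 * ((3*(e₁+1))! * (3*(e₂+1))! * Nat.choose (3*e₁+3*e₂+2) (3*e₁+2)) := by ring
      _ = _ := by rw [hA, hB]; ring
  rw [hL, fd]
  have key : (e₁+1)^2*(e₂+1)^2*((3*e₁+3)*(3*e₁+2)*((3*e₂+3)*(3*e₂+2)))*(e₁+e₂+2)^4
         + (e₁+1)^3*(e₂+1)*((3*e₁+3)*((3*e₂+3)*(3*e₂+2)*(3*e₂+1)))*(e₁+e₂+2)^4
      ≤ 32 * ((3*e₁+3*e₂+6)*((3*e₁+3*e₂+5)*((3*e₁+3*e₂+4)*(3*e₁+3*e₂+3)))) * ((e₁+1)^4*(e₂+1)^4) := by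
    have s1 : (e₁+1)^2*(e₂+1)^2*((3*e₁+3)*(3*e₁+2)*((3*e₂+3)*(3*e₂+2)))*(e₁+e₂+2)^4
        ≤ 81*((e₁+1)^4*(e₂+1)^4)*(e₁+e₂+2)^4 := by
      have : (3*e₁+3)*(3*e₁+2)*((3*e₂+3)*(3*e₂+2)) ≤ (3*(e₁+1))*(3*(e₁+1))*((3*(e₂+1))*(3*(e₂+1))) := by
        gcongr <;> omega
      calc (e₁+1)^2*(e₂+1)^2*((3*e₁+3)*(3*e₁+2)*((3*e₂+3)*(3*e₂+2)))*(e₁+e₂+2)^4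
          ≤ (e₁+1)^2*(e₂+1)^2*((3*(e₁+1))*(3*(e₁+1))*((3*(e₂+1))*(3*(e₂+1))))*(e₁+e₂+2)^4 := by
            gcongr
        _ = 81*((e₁+1)^4*(e₂+1)^4)*(e₁+e₂+2)^4 := by ring
    have s2 : (e₁+1)^3*(e₂+1)*((3*e₁+3)*((3*e₂+3)*(3*e₂+2)*(3*e₂+1)))*(e₁+e₂+2)^4
        ≤ 81*((e₁+1)^4*(e₂+1)^4)*(e₁+e₂+2)^4 := by
      have : (3*e₁+3)*((3*e₂+3)*(3*e₂+2)*(3*e₂+1)) ≤ (3*(e₁+1))*((3*(e₂+1))*(3*(e₂+1))*(3*(e₂+1))) := by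
        gcongr <;> omega
      calc (e₁+1)^3*(e₂+1)*((3*e₁+3)*((3*e₂+3)*(3*e₂+2)*(3*e₂+1)))*(e₁+e₂+2)^4
          ≤ (e₁+1)^3*(e₂+1)*((3*(e₁+1))*((3*(e₂+1))*(3*(e₂+1))*(3*(e₂+1))))*(e₁+e₂+2)^4 := by
            gcongr
        _ = 81*((e₁+1)^4*(e₂+1)^4)*(e₁+e₂+2)^4 := by ring
    have s3 : 162*(e₁+e₂+2)^4 ≤ 32*((3*e₁+3*e₂+6)*((3*e₁+3*e₂+5)*((3*e₁+3*e₂+4)*(3*e₁+3*e₂+3)))) := by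
      have hp : (e₁+e₂+2)^4 ≤ 16*(e₁+e₂+1)^4 := by
        have h : e₁+e₂+2 ≤ 2*(e₁+e₂+1) := by omega
        calc (e₁+e₂+2)^4 ≤ (2*(e₁+e₂+1))^4 := Nat.pow_le_pow_left h 4
          _ = 16*(e₁+e₂+1)^4 := by ring
      have hq : 81*(e₁+e₂+1)^4 ≤ (3*e₁+3*e₂+6)*((3*e₁+3*e₂+5)*((3*e₁+3*e₂+4)*(3*e₁+3*e₂+3))) := by
        have : (3*(e₁+e₂+1))*((3*(e₁+e₂+1))*((3*(e₁+e₂+1))*(3*(e₁+e₂+1))))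
            ≤ (3*e₁+3*e₂+6)*((3*e₁+3*e₂+5)*((3*e₁+3*e₂+4)*(3*e₁+3*e₂+3))) := by
          gcongr <;> omega
        calc 81*(e₁+e₂+1)^4 = (3*(e₁+e₂+1))*((3*(e₁+e₂+1))*((3*(e₁+e₂+1))*(3*(e₁+e₂+1)))) := by ring
          _ ≤ _ := this
      calc 162*(e₁+e₂+2)^4 ≤ 162*(16*(e₁+e₂+1)^4) := by gcongr
        _ = 32*(81*(e₁+e₂+1)^4) := by ring
        _ ≤ _ := by gcongr
    calc (e₁+1)^2*(e₂+1)^2*((3*e₁+3)*(3*e₁+2)*((3*e₂+3)*(3*e₂+2)))*(e₁+e₂+2)^4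
         + (e₁+1)^3*(e₂+1)*((3*e₁+3)*((3*e₂+3)*(3*e₂+2)*(3*e₂+1)))*(e₁+e₂+2)^4
        ≤ 162*((e₁+1)^4*(e₂+1)^4)*(e₁+e₂+2)^4 := by
          have := Nat.add_le_add s1 s2
          calc _ ≤ 81*((e₁+1)^4*(e₂+1)^4)*(e₁+e₂+2)^4 + 81*((e₁+1)^4*(e₂+1)^4)*(e₁+e₂+2)^4 := this
            _ = 162*((e₁+1)^4*(e₂+1)^4)*(e₁+e₂+2)^4 := by ring
      _ = (162*(e₁+e₂+2)^4) * ((e₁+1)^4*(e₂+1)^4) := by ring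
      _ ≤ (32*((3*e₁+3*e₂+6)*((3*e₁+3*e₂+5)*((3*e₁+3*e₂+4)*(3*e₁+3*e₂+3))))) * ((e₁+1)^4*(e₂+1)^4) := by gcongr
      _ = _ := by ring
  calc _ ≤ (32 * ((3*e₁+3*e₂+6)*((3*e₁+3*e₂+5)*((3*e₁+3*e₂+4)*(3*e₁+3*e₂+3)))) * ((e₁+1)^4*(e₂+1)^4)) * (3*e₁+3*e₂+2)! :=
        Nat.mul_le_mul_right _ key
    _ = 32 * ((3*e₁+3*e₂+6)*((3*e₁+3*e₂+5)*((3*e₁+3*e₂+4)*((3*e₁+3*e₂+3)*(3*e₁+3*e₂+2)!)))) * ((e₁+1)^4*(e₂+1)^4) := by ring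

private lemma quart' (u v : ℝ) : (u+v)^4 ≤ 8*(u^4+v^4) := by
  nlinarith [sq_nonneg (u-v), sq_nonneg (u+v), sq_nonneg (u^2-v^2)]

private lemma core' (F c1 D1 D2 : ℝ) (hF : 0 ≤ F) (hc : 0 < c1) (h1 : 0 < D1) (h2 : 0 < D2) :
    c1 * (32*F*(D1^4*D2^4)/(D1+D2)^4) / (36*(D1^8*D2^8))
      ≤ 8*c1*F/(D1+D2)^8*(1/D1^4+1/D2^4) := by
  have hD : 0 < D1 + D2 := by linarith
  have h4 : (D1+D2)^4 ≤ 8*(D1^4+D2^4) := quart' D1 D2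
  have h1' : D1 ≠ 0 := ne_of_gt h1
  have h2' : D2 ≠ 0 := ne_of_gt h2
  have hD' : D1 + D2 ≠ 0 := ne_of_gt hD
  have eqL : c1 * (32*F*(D1^4*D2^4)/(D1+D2)^4) / (36*(D1^8*D2^8))
      = (32*c1*F*(D1^4*D2^4)) / ((D1+D2)^4 * (36*(D1^8*D2^8))) := by
    field_simp
  have eqR : 8*c1*F/(D1+D2)^8*(1/D1^4+1/D2^4)
      = (8*c1*F*(D1^4+D2^4)) / ((D1+D2)^8 * (D1^4*D2^4)) := by
    have hs : (1/D1^4+1/D2^4) = (D1^4+D2^4)/(D1^4*D2^4) := by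
      field_simp
      ring
    rw [hs, _root_.div_mul_div_comm]
  rw [eqL, eqR, div_le_div_iff₀ (by positivity) (by positivity)]
  have key : 32*(D1+D2)^4 ≤ 288*(D1^4+D2^4) := by
    nlinarith [pow_nonneg h1.le 4, pow_nonneg h2.le 4]
  calc 32*c1*F*(D1^4*D2^4) * ((D1+D2)^8 * (D1^4*D2^4))
      = (32*(D1+D2)^4) * (c1*F*(D1^4*D2^4)^2*(D1+D2)^4) := by ring
    _ ≤ (288*(D1^4+D2^4)) * (c1*F*(D1^4*D2^4)^2*(D1+D2)^4) := by
        apply mul_le_mul_of_nonneg_right key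
        positivity
    _ = 8*c1*F*(D1^4+D2^4) * ((D1+D2)^4 * (36*(D1^8*D2^8))) := by ring

private lemma perterm' (d d₁ d₂ : ℕ) (hd : d = d₁ + d₂) (h₁ : 1 ≤ d₁) (h₂ : 1 ≤ d₂)
    (a b : ℝ) (ha : 0 ≤ a) (hb : 0 ≤ b)
    (hA : a ≤ 400^(d₁-1) * ((3*d₁)! : ℝ) / (6*(d₁:ℝ)^8))
    (hB : b ≤ 400^(d₂-1) * ((3*d₂)! : ℝ) / (6*(d₂:ℝ)^8)) :
    a * b * ((d₁:ℝ)^2*(d₂:ℝ)^2*(Nat.choose (3*d-4) (3*d₁-2) : ℝ)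
        + (d₁:ℝ)^3*(d₂:ℝ)*(Nat.choose (3*d-4) (3*d₁-1) : ℝ))
      ≤ 8 * 400^(d-2) * ((3*d)! : ℝ) / (d:ℝ)^8 * (1/(d₁:ℝ)^4 + 1/(d₂:ℝ)^4) := by
  obtain ⟨e₁, rfl⟩ : ∃ e, d₁ = e + 1 := ⟨d₁-1, by omega⟩
  obtain ⟨e₂, rfl⟩ : ∃ e, d₂ = e + 1 := ⟨d₂-1, by omega⟩
  subst hd
  have i1 : 3*(e₁+1+(e₂+1))-4 = 3*e₁+3*e₂+2 := by omega
  have i2 : 3*(e₁+1)-2 = 3*e₁+1 := by omega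
  have i3 : 3*(e₁+1)-1 = 3*e₁+2 := by omega
  have i4 : e₁+1-1 = e₁ := by omega
  have i5 : e₂+1-1 = e₂ := by omega
  have i6 : e₁+1+(e₂+1)-2 = e₁+e₂ := by omega
  have i7 : e₁+1+(e₂+1) = e₁+e₂+2 := by omega
  rw [i1, i2, i3, i6, i7]
  rw [i4] at hA
  rw [i5] at hB
  set D1 : ℝ := ((e₁+1 : ℕ) : ℝ) with hD1
  set D2 : ℝ := ((e₂+1 : ℕ) : ℝ) with hD2
  set F1 : ℝ := (((3*(e₁+1))! : ℕ) : ℝ) with hF1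
  set F2 : ℝ := (((3*(e₂+1))! : ℕ) : ℝ) with hF2
  set F : ℝ := (((3*(e₁+e₂+2))! : ℕ) : ℝ) with hF
  set S : ℝ := D1^2*D2^2*((Nat.choose (3*e₁+3*e₂+2) (3*e₁+1) : ℕ) : ℝ)
      + D1^3*D2*((Nat.choose (3*e₁+3*e₂+2) (3*e₁+2) : ℕ) : ℝ) with hSdef
  have hD1pos : (0:ℝ) < D1 := by rw [hD1]; positivity
  have hD2pos : (0:ℝ) < D2 := by rw [hD2]; positivity
  have hDD : ((e₁+e₂+2 : ℕ) : ℝ) = D1 + D2 := by rw [hD1, hD2]; push_cast; ring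
  have hSnn : (0:ℝ) ≤ S := by rw [hSdef, hD1, hD2]; positivity
  have hFnn : (0:ℝ) ≤ F := by rw [hF]; positivity
  have step1 : a * b * S ≤ ((400:ℝ)^e₁ * F1 / (6*D1^8)) * ((400:ℝ)^e₂ * F2 / (6*D2^8)) * S := by
    apply mul_le_mul_of_nonneg_right _ hSnn
    exact mul_le_mul hA hB hb (le_trans ha hA)
  have step2 : ((400:ℝ)^e₁ * F1 / (6*D1^8)) * ((400:ℝ)^e₂ * F2 / (6*D2^8)) * S
      = (400:ℝ)^(e₁+e₂) * (F1*F2*S) / (36*(D1^8*D2^8)) := by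
    rw [pow_add]; ring
  have step3 : F1*F2*S ≤ 32*F*(D1^4*D2^4)/(D1+D2)^4 := by
    rw [le_div_iff₀ (by positivity)]
    have hnat := keyA' e₁ e₂
    have : F1*F2*S*((e₁+e₂+2 : ℕ):ℝ)^4 ≤ 32*F*(D1^4*D2^4) := by
      rw [hSdef, hD1, hD2, hF1, hF2, hF]
      exact_mod_cast hnat
    rwa [hDD] at this
  have step4 : (400:ℝ)^(e₁+e₂) * (F1*F2*S) / (36*(D1^8*D2^8))
      ≤ (400:ℝ)^(e₁+e₂) * (32*F*(D1^4*D2^4)/(D1+D2)^4) / (36*(D1^8*D2^8)) := by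
    gcongr
  have step5 := core' F ((400:ℝ)^(e₁+e₂)) D1 D2 hFnn (by positivity) hD1pos hD2pos
  calc a * b * S ≤ ((400:ℝ)^e₁ * F1 / (6*D1^8)) * ((400:ℝ)^e₂ * F2 / (6*D2^8)) * S := step1
    _ = (400:ℝ)^(e₁+e₂) * (F1*F2*S) / (36*(D1^8*D2^8)) := step2
    _ ≤ (400:ℝ)^(e₁+e₂) * (32*F*(D1^4*D2^4)/(D1+D2)^4) / (36*(D1^8*D2^8)) := step4
    _ ≤ 8*(400:ℝ)^(e₁+e₂)*F/(D1+D2)^8*(1/D1^4+1/D2^4) := step5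
    _ = 8 * 400^(e₁+e₂) * F / ((e₁+e₂+2:ℕ):ℝ)^8 * (1/D1^4 + 1/D2^4) := by rw [hDD]

private lemma sum_inv4' : ∀ M : ℕ, ∑ m ∈ Finset.Icc 1 M, (1:ℝ)/(m:ℝ)^4 ≤ 2 := by
  have key : ∀ M : ℕ, 1 ≤ M → ∑ m ∈ Finset.Icc 1 M, (1:ℝ)/(m:ℝ)^4 ≤ 2 - 1/(M:ℝ) := by
    intro M hM
    induction M with
    | zero => omega
    | succ n ih =>
      rcases Nat.eq_or_lt_of_le hM with h | h
      · simp [← h]; norm_num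
      · have hn : 1 ≤ n := by omega
        rw [Finset.sum_Icc_succ_top (by omega : 1 ≤ n+1)]
        have step : (1:ℝ)/((n+1:ℕ):ℝ)^4 ≤ 1/(n:ℝ) - 1/((n:ℝ)+1) := by
          have hn' : (1:ℝ) ≤ (n:ℝ) := by exact_mod_cast hn
          have h1 : (0:ℝ) < n := by linarith
          have h2 : (0:ℝ) < (n:ℝ)+1 := by linarith
          rw [div_sub_div _ _ (ne_of_gt h1) (ne_of_gt h2)]
          push_cast
          rw [div_le_div_iff₀ (by positivity) (by positivity)]
          nlinarith [sq_nonneg ((n:ℝ)+1), sq_nonneg (n:ℝ)]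
        have := ih hn
        push_cast at step ⊢
        linarith
  intro M
  rcases Nat.eq_zero_or_pos M with h | h
  · simp [h]
  · have h1 := key M h
    have h2 : (0:ℝ) ≤ 1/(M:ℝ) := by positivity
    linarith

private lemma Kmain (K : ℕ → ℤ) (hK1 : K 1 = 1)
    (hKrec : ∀ d : ℕ, 2 ≤ d →
      K d = ∑ d₁ ∈ Finset.Ioo 0 d,
        K d₁ * K (d - d₁) *
          ((d₁ : ℤ)^2 * ((d - d₁ : ℕ) : ℤ)^2 * (Nat.choose (3*d - 4) (3*d₁ - 2) : ℤ)
            - (d₁ : ℤ)^3 * ((d - d₁ : ℕ) : ℤ) * (Nat.choose (3*d - 4) (3*d₁ - 1) : ℤ))) :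
    ∀ n : ℕ, 1 ≤ n → |((K n : ℤ) : ℝ)| ≤ 400^(n-1) * ((3*n)! : ℝ) / (6*(n:ℝ)^8) := by
  intro n
  induction n using Nat.strong_induction_on with
  | _ n ih =>
    intro hn
    rcases eq_or_lt_of_le hn with h1 | h2
    · rw [← h1, hK1]
      norm_num [Nat.factorial]
    · have hd : 2 ≤ n := h2
      have hrec := hKrec n hd
      have hcast : ((K n : ℤ):ℝ) = ∑ d₁ ∈ Finset.Ioo 0 n,
          ((K d₁ : ℤ):ℝ) * ((K (n-d₁) : ℤ):ℝ) *
            ((d₁:ℝ)^2*((n-d₁:ℕ):ℝ)^2*((Nat.choose (3*n-4) (3*d₁-2) : ℕ):ℝ)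
              - (d₁:ℝ)^3*((n-d₁:ℕ):ℝ)*((Nat.choose (3*n-4) (3*d₁-1) : ℕ):ℝ)) := by
        exact_mod_cast congrArg (fun z : ℤ => (z : ℝ)) hrec
      set c : ℝ := 8 * 400^(n-2) * ((3*n)! : ℝ) / (n:ℝ)^8 with hc
      have hcnn : (0:ℝ) ≤ c := by rw [hc]; positivity
      have hterm : ∀ d₁ ∈ Finset.Ioo 0 n,
          |((K d₁ : ℤ):ℝ) * ((K (n-d₁) : ℤ):ℝ) *
            ((d₁:ℝ)^2*((n-d₁:ℕ):ℝ)^2*((Nat.choose (3*n-4) (3*d₁-2) : ℕ):ℝ)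
              - (d₁:ℝ)^3*((n-d₁:ℕ):ℝ)*((Nat.choose (3*n-4) (3*d₁-1) : ℕ):ℝ))|
          ≤ c * (1/(d₁:ℝ)^4 + 1/((n-d₁:ℕ):ℝ)^4) := by
        intro d₁ hmem
        rw [Finset.mem_Ioo] at hmem
        have h₁ : 1 ≤ d₁ := hmem.1
        have h₂ : 1 ≤ n - d₁ := by omega
        have hsum : n = d₁ + (n - d₁) := by omega
        set d₂ := n - d₁ with hd₂
        have hX : (0:ℝ) ≤ (d₁:ℝ)^2*(d₂:ℝ)^2*((Nat.choose (3*n-4) (3*d₁-2) : ℕ):ℝ) := by positivity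
        have hY : (0:ℝ) ≤ (d₁:ℝ)^3*(d₂:ℝ)*((Nat.choose (3*n-4) (3*d₁-1) : ℕ):ℝ) := by positivity
        have habs : |((K d₁ : ℤ):ℝ) * ((K d₂ : ℤ):ℝ) *
            ((d₁:ℝ)^2*(d₂:ℝ)^2*((Nat.choose (3*n-4) (3*d₁-2) : ℕ):ℝ)
              - (d₁:ℝ)^3*(d₂:ℝ)*((Nat.choose (3*n-4) (3*d₁-1) : ℕ):ℝ))|
            ≤ |((K d₁ : ℤ):ℝ)| * |((K d₂ : ℤ):ℝ)| *
              ((d₁:ℝ)^2*(d₂:ℝ)^2*((Nat.choose (3*n-4) (3*d₁-2) : ℕ):ℝ)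
                + (d₁:ℝ)^3*(d₂:ℝ)*((Nat.choose (3*n-4) (3*d₁-1) : ℕ):ℝ)) := by
          rw [abs_mul, abs_mul]
          apply mul_le_mul_of_nonneg_left _ (by positivity)
          calc |(d₁:ℝ)^2*(d₂:ℝ)^2*((Nat.choose (3*n-4) (3*d₁-2) : ℕ):ℝ)
              - (d₁:ℝ)^3*(d₂:ℝ)*((Nat.choose (3*n-4) (3*d₁-1) : ℕ):ℝ)|
              ≤ |(d₁:ℝ)^2*(d₂:ℝ)^2*((Nat.choose (3*n-4) (3*d₁-2) : ℕ):ℝ)|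
                + |(d₁:ℝ)^3*(d₂:ℝ)*((Nat.choose (3*n-4) (3*d₁-1) : ℕ):ℝ)| := abs_sub _ _
            _ = _ := by rw [abs_of_nonneg hX, abs_of_nonneg hY]
        refine le_trans habs ?_
        have hper := perterm' n d₁ d₂ hsum h₁ h₂ |((K d₁ : ℤ):ℝ)| |((K d₂ : ℤ):ℝ)|
          (abs_nonneg _) (abs_nonneg _) (ih d₁ (by omega) h₁) (ih d₂ (by omega) h₂)
        exact le_trans hper (le_of_eq (by rw [hc]))
      have hIoo : Finset.Ioo 0 n = Finset.Icc 1 (n-1) := by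
        ext x; simp only [Finset.mem_Ioo, Finset.mem_Icc]; omega
      have hs1 : ∑ d₁ ∈ Finset.Ioo 0 n, (1:ℝ)/(d₁:ℝ)^4 ≤ 2 := by
        rw [hIoo]; exact sum_inv4' (n-1)
      have hs2 : ∑ d₁ ∈ Finset.Ioo 0 n, (1:ℝ)/((n-d₁:ℕ):ℝ)^4 ≤ 2 := by
        have heq : ∑ d₁ ∈ Finset.Ioo 0 n, (1:ℝ)/((n-d₁:ℕ):ℝ)^4
            = ∑ d₁ ∈ Finset.Ioo 0 n, (1:ℝ)/(d₁:ℝ)^4 := by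
          apply Finset.sum_nbij' (i := fun d₁ => n - d₁) (j := fun d₁ => n - d₁)
          · intro a ha; simp only [Finset.mem_Ioo] at *; omega
          · intro a ha; simp only [Finset.mem_Ioo] at *; omega
          · intro a ha; simp only [Finset.mem_Ioo] at *; omega
          · intro a ha; simp only [Finset.mem_Ioo] at *; omega
          · intro a ha; rfl
        rw [heq]; exact hs1
      calc |((K n : ℤ):ℝ)|
          = |∑ d₁ ∈ Finset.Ioo 0 n,
              ((K d₁ : ℤ):ℝ) * ((K (n-d₁) : ℤ):ℝ) *
                ((d₁:ℝ)^2*((n-d₁:ℕ):ℝ)^2*((Nat.choose (3*n-4) (3*d₁-2) : ℕ):ℝ)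
                  - (d₁:ℝ)^3*((n-d₁:ℕ):ℝ)*((Nat.choose (3*n-4) (3*d₁-1) : ℕ):ℝ))| := by rw [hcast]
        _ ≤ ∑ d₁ ∈ Finset.Ioo 0 n,
              |((K d₁ : ℤ):ℝ) * ((K (n-d₁) : ℤ):ℝ) *
                ((d₁:ℝ)^2*((n-d₁:ℕ):ℝ)^2*((Nat.choose (3*n-4) (3*d₁-2) : ℕ):ℝ)
                  - (d₁:ℝ)^3*((n-d₁:ℕ):ℝ)*((Nat.choose (3*n-4) (3*d₁-1) : ℕ):ℝ))| :=
            Finset.abs_sum_le_sum_abs _ _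
        _ ≤ ∑ d₁ ∈ Finset.Ioo 0 n, c * (1/(d₁:ℝ)^4 + 1/((n-d₁:ℕ):ℝ)^4) :=
            Finset.sum_le_sum hterm
        _ = c * ((∑ d₁ ∈ Finset.Ioo 0 n, (1:ℝ)/(d₁:ℝ)^4)
              + (∑ d₁ ∈ Finset.Ioo 0 n, (1:ℝ)/((n-d₁:ℕ):ℝ)^4)) := by
            rw [← Finset.sum_add_distrib, ← Finset.mul_sum]
        _ ≤ c * (2 + 2) := by
            apply mul_le_mul_of_nonneg_left _ hcnn
            exact add_le_add hs1 hs2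
        _ ≤ 400^(n-1) * ((3*n)! : ℝ) / (6*(n:ℝ)^8) := by
            rw [hc]
            have hpow : (400:ℝ)^(n-1) = 400 * 400^(n-2) := by
              have h12 : n - 1 = (n-2) + 1 := by omega
              rw [h12, pow_succ]
              ring
            rw [hpow]
            have hXnn : (0:ℝ) ≤ 400^(n-2) * ((3*n)! : ℝ) / (n:ℝ)^8 := by positivity
            calc 8 * 400^(n-2) * ((3*n)! : ℝ) / (n:ℝ)^8 * (2+2)
                = 32 * (400^(n-2) * ((3*n)! : ℝ) / (n:ℝ)^8) := by ring
              _ ≤ (400/6) * (400^(n-2) * ((3*n)! : ℝ) / (n:ℝ)^8) := by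
                  apply mul_le_mul_of_nonneg_right (by norm_num) hXnn
              _ = 400 * 400^(n-2) * ((3*n)! : ℝ) / (6*(n:ℝ)^8) := by ring


/-- If `K : ℕ → ℤ` is the sequence of Kontsevich numbers, then there
is a constant `C > 0` with `log (K n) ≤ 3 n log n + C n` for all `n ≥ 1`. -/
theorem kontsevich_log_upper_bound
    (K : ℕ → ℤ)
    (hK1 : K 1 = 1)
    (hKrec : ∀ d : ℕ, 2 ≤ d →
      K d = ∑ d₁ ∈ Finset.Ioo 0 d,
        K d₁ * K (d - d₁) *
          ((d₁ : ℤ)^2 * ((d - d₁ : ℕ) : ℤ)^2 * (Nat.choose (3*d - 4) (3*d₁ - 2) : ℤ)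
            - (d₁ : ℤ)^3 * ((d - d₁ : ℕ) : ℤ) * (Nat.choose (3*d - 4) (3*d₁ - 1) : ℤ))) :
    ∃ C : ℝ, 0 < C ∧ ∀ n : ℕ, 1 ≤ n →
      Real.log (K n) ≤ 3 * n * Real.log n + C * n := by
  refine ⟨Real.log 400 + 3 * Real.log 3 + 1, ?_, ?_⟩
  · have h400 : (0:ℝ) < Real.log 400 := Real.log_pos (by norm_num)
    have h3 : (0:ℝ) < Real.log 3 := Real.log_pos (by norm_num)
    linarith
  · intro n hn
    have hnR : (1:ℝ) ≤ (n:ℝ) := by exact_mod_cast hn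
    have hlogn : (0:ℝ) ≤ Real.log n := Real.log_nonneg hnR
    have h3 : (0:ℝ) < Real.log 3 := Real.log_pos (by norm_num)
    have h400 : (0:ℝ) < Real.log 400 := Real.log_pos (by norm_num)
    have hb := Kmain K hK1 hKrec n hn
    have hE : 400^(n-1) * ((3*n)! : ℝ) / (6*(n:ℝ)^8) ≤ (400:ℝ)^n * ((3*n:ℕ):ℝ)^(3*n) := by
      have h8 : (1:ℝ) ≤ (n:ℝ)^8 := by
        calc (1:ℝ) = 1^8 := by norm_num
          _ ≤ (n:ℝ)^8 := pow_le_pow_left₀ (by norm_num) hnR 8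
      have h18 : (1:ℝ) ≤ 6*(n:ℝ)^8 := by linarith
      have e1 : 400^(n-1) * ((3*n)! : ℝ) / (6*(n:ℝ)^8) ≤ 400^(n-1) * ((3*n)! : ℝ) :=
        _root_.div_le_self (by positivity) h18
      refine le_trans e1 ?_
      have e2 : ((3*n)! : ℝ) ≤ ((3*n:ℕ):ℝ)^(3*n) := by
        exact_mod_cast Nat.factorial_le_pow (3*n)
      have e3 : (400:ℝ)^(n-1) ≤ (400:ℝ)^n := by
        apply pow_le_pow_right₀ (by norm_num)
        omega
      exact mul_le_mul e3 e2 (by positivity) (by positivity)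
    have habsle : |((K n : ℤ):ℝ)| ≤ (400:ℝ)^n * ((3*n:ℕ):ℝ)^(3*n) := le_trans hb hE
    have hlogE : Real.log ((400:ℝ)^n * ((3*n:ℕ):ℝ)^(3*n))
        ≤ 3 * n * Real.log n + (Real.log 400 + 3 * Real.log 3 + 1) * n := by
      have hne1 : ((400:ℝ)^n) ≠ 0 := by positivity
      have h3n : ((3*n:ℕ):ℝ) = 3*(n:ℝ) := by push_cast; ring
      have hne2 : (((3*n:ℕ):ℝ)^(3*n)) ≠ 0 := by rw [h3n]; positivity
      rw [Real.log_mul hne1 hne2, Real.log_pow, Real.log_pow, h3n,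
        Real.log_mul (by norm_num) (by linarith)]
      push_cast
      nlinarith [hlogn, hnR, h3, h400]
    rw [← Real.log_abs]
    rcases le_or_gt 1 |((K n : ℤ):ℝ)| with hone | hone
    · have hstep : Real.log |((K n : ℤ):ℝ)| ≤ Real.log ((400:ℝ)^n * ((3*n:ℕ):ℝ)^(3*n)) :=
        Real.log_le_log (by linarith) habsle
      exact le_trans hstep hlogE
    · have h0 : |((K n : ℤ):ℝ)| = 0 := by
        have : (K n).natAbs = 0 := by
          by_contra hcon
          have : 1 ≤ (K n).natAbs := by omega
          have : (1:ℝ) ≤ |((K n : ℤ):ℝ)| := by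
            rw [← Int.cast_abs]
            exact_mod_cast Int.one_le_abs (by omega)
          linarith
        have : K n = 0 := by omega
        simp [this]
      rw [h0, Real.log_zero]
      have hCn : (0:ℝ) ≤ (Real.log 400 + 3 * Real.log 3 + 1) * n := by positivity
      nlinarith [hlogn, hnR]
end

section
/- Let K : ℕ → ℤ be the sequence of Kontsevich numbers, defined by K(1) = 1 and, for d ≥ 2, K(d) = Σ_{d₁+d₂=d, d₁≥1, d₂≥1} K(d₁)·K(d₂)·( d₁²·d₂²·C(3d−4, 3d₁−2) − d₁³·d₂·C(3d−4, 3d₁−1) ). Then there exists a constant C > 0 such that for all n ≥ 1, log K(n) ≥ 3·n·log n − C·n. -/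
/-!
Pair the terms `d₁` and `d - d₁` of the recursion. The ratios of consecutive binomial coefficients
make every such pair nonnegative once the earlier values are positive, so `2 K(d)` dominates the
single pair `{1, d - 1}`, which equals `(d-1)((d-1)² + 5(d-1) - 2) K(d-1) / 2 ≥ d³ K(d-1) / 4`.
Thus `K(n) ≥ (n!)³ / 8ⁿ`, and `n! ≥ (n/e)ⁿ` gives the bound with `C = 6`.
-/

open Finset Nat

theorem Finset.sum_Ioo_zero_reflect {M : Type*} [AddCommMonoid M] (f : ℕ → M) (d : ℕ) :
    ∑ x ∈ Ioo 0 d, f (d - x) = ∑ x ∈ Ioo 0 d, f x :=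
  sum_nbij' (d - ·) (d - ·) (by simp; omega) (by simp; omega) (by simp; omega) (by simp; omega)
    (fun _ _ => rfl)

theorem Real.mul_log_sub_le_log_factorial (n : ℕ) : n * Real.log n - n ≤ Real.log (n ! : ℕ) := by
  rcases Nat.eq_zero_or_pos n with rfl | hn
  · simp
  have hle := Real.log_le_log (by positivity)
    (Real.pow_div_factorial_le_exp (x := n) (Nat.cast_nonneg n) n)
  rw [Real.log_div (by positivity) (by positivity), Real.log_pow, Real.log_exp] at hle
  linarith

def kontsevichWeight (d d₁ : ℕ) : ℤ :=
  (d₁ : ℤ)^2 * ((d - d₁ : ℕ) : ℤ)^2 * (Nat.choose (3*d - 4) (3*d₁ - 2) : ℤ)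
    - (d₁ : ℤ)^3 * ((d - d₁ : ℕ) : ℤ) * (Nat.choose (3*d - 4) (3*d₁ - 1) : ℤ)

def IsKontsevichSequence (K : ℕ → ℤ) : Prop :=
  K 1 = 1 ∧ ∀ d, 2 ≤ d → K d = ∑ d₁ ∈ Ioo 0 d, K d₁ * K (d - d₁) * kontsevichWeight d d₁

/-- With `n = 3x + 3y - 4`, the hypotheses are the ratios of consecutive binomial coefficients
`A = choose n (3x-3)`, `B = choose n (3x-2)`, `C = choose n (3x-1)`. -/
theorem sq_mul_add_sq_mul_le_of_choose_ratios {R : Type*} [CommRing R] [LinearOrder R]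
    [IsStrictOrderedRing R] {x y A B C : R} (hx : 1 ≤ x) (hy : 1 ≤ y) (hB : 0 ≤ B)
    (hAB : B * (3*x - 2) = A * (3*y - 1)) (hBC : C * (3*x - 1) = B * (3*y - 2)) :
    x^2 * C + y^2 * A ≤ 2 * x * y * B := by
  -- multiplying by `(3x-1)(3y-1)` eliminates `A` and `C`
  have hP : 0 ≤ 3*x^2*y + 3*x*y^2 + 2*x*y - 2*x^2 - 2*y^2 := by
    nlinarith [mul_nonneg (sq_nonneg x) (sub_nonneg.2 hy),
      mul_nonneg (sq_nonneg y) (sub_nonneg.2 hx)]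
  have hpos : 0 < (3*x - 1) * (3*y - 1) := by nlinarith
  have key : (2*x*y*B - x^2*C - y^2*A) * ((3*x - 1) * (3*y - 1))
      = B * (3*x^2*y + 3*x*y^2 + 2*x*y - 2*x^2 - 2*y^2) := by
    linear_combination (-(x^2) * (3*y - 1)) * hBC + (y^2 * (3*x - 1)) * hAB
  have := (mul_nonneg_iff_of_pos_right hpos).mp (key.symm ▸ mul_nonneg hB hP)
  linarith

theorem kontsevichWeight_add_reflect_nonneg {d x : ℕ} (hx : 0 < x) (hxd : x < d) :
    0 ≤ kontsevichWeight d x + kontsevichWeight d (d - x) := by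
  obtain ⟨a, rfl⟩ : ∃ a, x = a + 1 := ⟨x - 1, by omega⟩
  obtain ⟨b, rfl⟩ : ∃ b, d = a + 1 + (b + 1) := ⟨d - a - 2, by omega⟩
  set n := 3 * a + 3 * b + 2
  have hA : n.choose (3 * b + 2) = n.choose (3 * a) := choose_symm_of_eq_add (by omega)
  have hB : n.choose (3 * b + 1) = n.choose (3 * a + 1) := choose_symm_of_eq_add (by omega)
  have hAB := choose_succ_right_eq n (3 * a)
  have hBC := choose_succ_right_eq n (3 * a + 1)
  simp only [kontsevichWeight, show 3 * (a + 1 + (b + 1)) - 4 = n by omega,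
    show a + 1 + (b + 1) - (a + 1) = b + 1 by omega,
    show a + 1 + (b + 1) - (b + 1) = a + 1 by omega,
    show 3 * (a + 1) - 2 = 3 * a + 1 by omega, show 3 * (a + 1) - 1 = 3 * a + 2 by omega,
    show 3 * (b + 1) - 2 = 3 * b + 1 by omega, show 3 * (b + 1) - 1 = 3 * b + 2 by omega, hA, hB]
  rw [show n - 3 * a = 3 * b + 2 by omega] at hAB
  rw [show n - (3 * a + 1) = 3 * b + 1 by omega] at hBC
  zify at hAB hBC
  have := sq_mul_add_sq_mul_le_of_choose_ratios (x := ((a + 1 : ℕ) : ℤ)) (y := ((b + 1 : ℕ) : ℤ))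
    (A := n.choose (3 * a)) (B := n.choose (3 * a + 1)) (C := n.choose (3 * a + 2))
    (by simp) (by simp) (Int.natCast_nonneg _)
    (by push_cast; linear_combination hAB) (by push_cast; linear_combination hBC)
  nlinarith [mul_nonneg (Int.natCast_nonneg (a + 1)) (Int.natCast_nonneg (b + 1))]

theorem two_mul_kontsevichWeight_one_add {b : ℕ} (hb : 1 ≤ b) :
    2 * (kontsevichWeight (b + 1) 1 + kontsevichWeight (b + 1) b)
      = b * ((b : ℤ)^2 + 5 * b - 2) := by
  obtain ⟨c, rfl⟩ : ∃ c, b = c + 1 := ⟨b - 1, by omega⟩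
  set n := 3 * c + 2
  have h2 := choose_succ_right_eq n 1
  rw [choose_one_right, show n - 1 = 3 * c + 1 by omega] at h2
  zify at h2
  simp only [kontsevichWeight, show 3 * (c + 1 + 1) - 4 = n by omega,
    show c + 1 + 1 - 1 = c + 1 by omega, show c + 1 + 1 - (c + 1) = 1 by omega,
    show 3 * 1 - 2 = 1 by omega, show 3 * 1 - 1 = 2 by omega,
    show 3 * (c + 1) - 2 = n - 1 by omega, show 3 * (c + 1) - 1 = n by omega,
    choose_symm_of_eq_add (show n = (n - 1) + 1 by omega), choose_one_right, choose_self]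
  push_cast [n] at h2 ⊢
  linear_combination (-((c : ℤ) + 1)) * h2

namespace IsKontsevichSequence

variable {K : ℕ → ℤ} (hK : IsKontsevichSequence K)
include hK

theorem two_mul_eq_sum_reflect {d : ℕ} (hd : 2 ≤ d) :
    2 * K d = ∑ x ∈ Ioo 0 d,
      K x * K (d - x) * (kontsevichWeight d x + kontsevichWeight d (d - x)) := by
  calc 2 * K d = ∑ x ∈ Ioo 0 d, K x * K (d - x) * kontsevichWeight d x
        + ∑ x ∈ Ioo 0 d, K (d - x) * K (d - (d - x)) * kontsevichWeight d (d - x) := by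
        rw [sum_Ioo_zero_reflect (fun x => K x * K (d - x) * kontsevichWeight d x), ← hK.2 d hd]
        ring
    _ = _ := by
      rw [← sum_add_distrib]
      refine sum_congr rfl fun x hx => ?_
      rw [Nat.sub_sub_self (mem_Ioo.1 hx).2.le]
      ring

theorem cube_mul_le {b : ℕ} (hb : 1 ≤ b) (hpos : ∀ m ∈ Icc 1 b, 0 < K m) :
    ((b : ℤ) + 1)^3 * K b ≤ 8 * K (b + 1) := by
  have hterm : K 1 * K b * (kontsevichWeight (b + 1) 1 + kontsevichWeight (b + 1) b)
      ≤ 2 * K (b + 1) := by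
    rw [hK.two_mul_eq_sum_reflect (by omega)]
    refine single_le_sum (f := fun x => K x * K (b + 1 - x) *
      (kontsevichWeight (b + 1) x + kontsevichWeight (b + 1) (b + 1 - x))) (fun x hx => ?_)
      (by simp; omega)
    obtain ⟨hx0, hxb⟩ := mem_Ioo.1 hx
    exact mul_nonneg (mul_pos (hpos x (by simp; omega)) (hpos _ (by simp; omega))).le
      (kontsevichWeight_add_reflect_nonneg hx0 hxb)
  rw [hK.1, one_mul, ← mul_le_mul_iff_of_pos_left (show (0 : ℤ) < 2 by norm_num), mul_left_comm,
    two_mul_kontsevichWeight_one_add hb] at hterm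
  have hb' : (1 : ℤ) ≤ b := by exact_mod_cast hb
  -- `2b(b² + 5b - 2) - (b + 1)³ = (b - 1)(b² + 8b + 1)`
  nlinarith [mul_nonneg (hpos b (by simp; omega)).le
    (mul_nonneg (sub_nonneg.2 hb') (show (0 : ℤ) ≤ b^2 + 8 * b + 1 by positivity))]

theorem pos {d : ℕ} (hd : 1 ≤ d) : 0 < K d := by
  induction d using Nat.strong_induction_on with
  | _ d ih =>
    rcases hd.eq_or_lt with rfl | hd
    · simp [hK.1]
    obtain ⟨b, rfl⟩ : ∃ b, d = b + 1 := ⟨d - 1, by omega⟩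
    have hpos : ∀ m ∈ Icc 1 b, 0 < K m := fun m hm => ih m (by simp at hm; omega) (mem_Icc.1 hm).1
    have hgrow := hK.cube_mul_le (by omega) hpos
    linarith [mul_pos (by positivity : (0 : ℤ) < ((b : ℤ) + 1)^3) (hpos b (by simp; omega))]

theorem factorial_cube_le {n : ℕ} (hn : 1 ≤ n) : ((n ! : ℕ) : ℤ)^3 ≤ 8^n * K n := by
  induction n, hn using Nat.le_induction with
  | base => simp [hK.1]
  | succ n hn ih =>
    have hgrow := hK.cube_mul_le hn fun m hm => hK.pos (mem_Icc.1 hm).1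
    calc ((n + 1)! : ℤ)^3 = ((n : ℤ) + 1)^3 * (n ! : ℤ)^3 := by push_cast [factorial_succ]; ring
      _ ≤ ((n : ℤ) + 1)^3 * (8^n * K n) := by gcongr
      _ = 8^n * (((n : ℤ) + 1)^3 * K n) := by ring
      _ ≤ 8^n * (8 * K (n + 1)) := by gcongr
      _ = 8^(n + 1) * K (n + 1) := by ring

end IsKontsevichSequence

/-- If `K : ℕ → ℤ` is the sequence of Kontsevich numbers, then there
is a constant `C > 0` with `log (K n) ≥ 3 n log n - C n` for all `n ≥ 1`. -/
theorem kontsevich_log_lower_bound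
    (K : ℕ → ℤ)
    (hK1 : K 1 = 1)
    (hKrec : ∀ d : ℕ, 2 ≤ d →
      K d = ∑ d₁ ∈ Finset.Ioo 0 d,
        K d₁ * K (d - d₁) *
          ((d₁ : ℤ)^2 * ((d - d₁ : ℕ) : ℤ)^2 * (Nat.choose (3*d - 4) (3*d₁ - 2) : ℤ)
            - (d₁ : ℤ)^3 * ((d - d₁ : ℕ) : ℤ) * (Nat.choose (3*d - 4) (3*d₁ - 1) : ℤ))) :
    ∃ C : ℝ, 0 < C ∧ ∀ n : ℕ, 1 ≤ n →
      3 * n * Real.log n - C * n ≤ Real.log (K n) := by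
  have hK : IsKontsevichSequence K := ⟨hK1, hKrec⟩
  refine ⟨6, by norm_num, fun n hn => ?_⟩
  have hpos : (0 : ℝ) < K n := by exact_mod_cast hK.pos hn
  have hfac : ((n ! : ℕ) : ℝ)^3 ≤ 8^n * K n := by exact_mod_cast hK.factorial_cube_le hn
  have hlog : 3 * Real.log (n ! : ℕ) ≤ n * Real.log 8 + Real.log (K n) := by
    have := Real.log_le_log (by positivity) hfac
    rwa [Real.log_pow, Real.log_mul (by positivity) hpos.ne', Real.log_pow] at this
  have hlog8 : Real.log 8 ≤ 3 := by
    rw [show (8 : ℝ) = 2^3 by norm_num, Real.log_pow, Nat.cast_ofNat]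
    linarith [Real.log_le_sub_one_of_pos (show (0 : ℝ) < 2 by norm_num)]
  linarith [Real.mul_log_sub_le_log_factorial n, mul_le_mul_of_nonneg_left hlog8 n.cast_nonneg]
end

section
/- Let K : ℕ → ℤ be the sequence of Kontsevich numbers, defined by K(1) = 1 and, for d ≥ 2, K(d) = Σ_{d₁+d₂=d, d₁≥1, d₂≥1} K(d₁)·K(d₂)·( d₁²·d₂²·C(3d−4, 3d₁−2) − d₁³·d₂·C(3d−4, 3d₁−1) ). Then there exists a constant C > 0 such that for all n ≥ 1, |log K(n) − 3·n·log n| ≤ C·n; in other words, log K(n) = 3·n·log n + O(n) as n → ∞. -/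
/-!
Put `N d = K d / (3d-1)!`. In terms of `N` the recursion loses its binomial coefficients:
`(3d-1)(3d-2)(3d-3) N d = ∑ N a N b a² b (3b-1)(2a-b)` with `b = d - a`. Its summands can be
negative, but those at `a` and `b` add up to `N a N b · ab (3ab(d+2) - 2d²)`, which is positive.
Keeping only the term `a = 1` gives `N d ≥ N (d-1) / 108`; and the bound `N a ≤ 4^a / (8a⁴)`
propagates through the recursion, the weight `a⁻⁴` being what makes `∑ 1/(a²b²) ≤ 8/d²` beat the
cubic factor on the left. Hence `N d = e^{O(d)}`, while `(3d-1)! = e^{O(d)} d^{3d}` because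
`n! ≤ nⁿ ≤ eⁿ n!`.
-/

open Finset Real
open scoped Nat

def kontsevichCoeff (d a : ℕ) : ℤ :=
  (a : ℤ) ^ 2 * ((d - a : ℕ) : ℤ) ^ 2 * ((3 * d - 4).choose (3 * a - 2) : ℤ)
    - (a : ℤ) ^ 3 * ((d - a : ℕ) : ℤ) * ((3 * d - 4).choose (3 * a - 1) : ℤ)

theorem factorial_mul_kontsevichCoeff {a d : ℕ} (ha : 0 < a) (had : a < d) :
    ((3 * a - 1)! * (3 * (d - a) - 1)! : ℝ) * kontsevichCoeff d a =
      (3 * d - 4)! *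
        ((a : ℝ) ^ 2 * (d - a : ℕ) * (3 * (d - a : ℕ) - 1) * (2 * a - (d - a : ℕ))) := by
  obtain ⟨i, rfl⟩ : ∃ i, a = i + 1 := ⟨a - 1, by omega⟩
  obtain ⟨j, rfl⟩ : ∃ j, d = i + j + 2 := ⟨d - i - 2, by omega⟩
  have h₁ := congrArg (Nat.cast : ℕ → ℝ)
    (Nat.choose_mul_factorial_mul_factorial (show 3 * i + 1 ≤ 3 * i + 3 * j + 2 by omega))
  have h₂ := congrArg (Nat.cast : ℕ → ℝ)
    (Nat.choose_mul_factorial_mul_factorial (show 3 * i + 2 ≤ 3 * i + 3 * j + 2 by omega))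
  rw [show 3 * i + 3 * j + 2 - (3 * i + 1) = 3 * j + 1 by omega] at h₁
  rw [show 3 * i + 3 * j + 2 - (3 * i + 2) = 3 * j by omega] at h₂
  simp only [kontsevichCoeff, show i + j + 2 - (i + 1) = j + 1 by omega,
    show 3 * (i + 1) - 1 = 3 * i + 2 by omega, show 3 * (i + 1) - 2 = 3 * i + 1 by omega,
    show 3 * (j + 1) - 1 = 3 * j + 2 by omega,
    show 3 * (i + j + 2) - 4 = 3 * i + 3 * j + 2 by omega]
  have f₁ : (3 * i + 2)! = (3 * i + 2) * (3 * i + 1)! := Nat.factorial_succ _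
  have f₂ : (3 * j + 1)! = (3 * j + 1) * (3 * j)! := Nat.factorial_succ _
  have f₃ : (3 * j + 2)! = (3 * j + 2) * (3 * j + 1)! := Nat.factorial_succ _
  rw [f₁, f₃, f₂]
  rw [f₂] at h₁
  rw [f₁] at h₂
  push_cast at h₁ h₂ ⊢
  linear_combination
    ((i:ℝ) + 1) ^ 2 * ((j:ℝ) + 1) ^ 2 * (3 * i + 2) * (3 * j + 2) * h₁
      - ((i:ℝ) + 1) ^ 3 * ((j:ℝ) + 1) * (3 * j + 2) * (3 * j + 1) * h₂

theorem sum_Ioo_reflect {M : Type*} [AddCommMonoid M] (f : ℕ → M) (d : ℕ) :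
    ∑ a ∈ Ioo 0 d, f (d - a) = ∑ a ∈ Ioo 0 d, f a := by
  rw [← Ico_add_one_left_eq_Ioo, zero_add, sum_Ico_reflect f 1 (Nat.le_succ d)]
  simp

theorem sum_Ioo_inv_sq_mul_inv_sq_le (d : ℕ) :
    ∑ a ∈ Ioo 0 d, ((a : ℝ) ^ 2 * ((d - a : ℕ) : ℝ) ^ 2)⁻¹ ≤ 8 / (d : ℝ) ^ 2 := by
  have hterm : ∀ a ∈ Ioo 0 d, ((a : ℝ) ^ 2 * ((d - a : ℕ) : ℝ) ^ 2)⁻¹ ≤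
      2 / (d : ℝ) ^ 2 * (((a : ℝ) ^ 2)⁻¹ + (((d - a : ℕ) : ℝ) ^ 2)⁻¹) := by
    intro a ha
    rw [mem_Ioo] at ha
    have hd : (d : ℝ) = a + (d - a : ℕ) := by exact_mod_cast (Nat.add_sub_cancel' ha.2.le).symm
    have ha0 : (0 : ℝ) < a := by exact_mod_cast ha.1
    have hb0 : (0 : ℝ) < (d - a : ℕ) := by exact_mod_cast Nat.sub_pos_of_lt ha.2
    set b : ℝ := ((d - a : ℕ) : ℝ)
    rw [hd, show 2 / ((a : ℝ) + b) ^ 2 * (((a : ℝ) ^ 2)⁻¹ + (b ^ 2)⁻¹)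
        = 2 * (a ^ 2 + b ^ 2) / ((a + b) ^ 2 * (a ^ 2 * b ^ 2)) by field_simp; ring,
      inv_eq_one_div, div_le_div_iff₀ (by positivity) (by positivity)]
    nlinarith [mul_nonneg (sq_nonneg ((a : ℝ) - b)) (sq_nonneg ((a : ℝ) * b))]
  calc _ ≤ ∑ a ∈ Ioo 0 d, 2 / (d : ℝ) ^ 2 * (((a : ℝ) ^ 2)⁻¹ + (((d - a : ℕ) : ℝ) ^ 2)⁻¹) :=
        sum_le_sum hterm
    _ = 4 / (d : ℝ) ^ 2 * ∑ a ∈ Ioo 0 d, ((a : ℝ) ^ 2)⁻¹ := by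
        rw [← mul_sum, sum_add_distrib, sum_Ioo_reflect (fun a => ((a : ℝ) ^ 2)⁻¹)]; ring
    _ ≤ 4 / (d : ℝ) ^ 2 * 2 := by
        gcongr
        simpa using sum_Ioo_inv_sq_le (α := ℝ) 0 d
    _ = 8 / (d : ℝ) ^ 2 := by ring

-- `(3d-1)! / (3d-4)!`
def fallingCube (x : ℝ) : ℝ := (3 * x - 1) * (3 * x - 2) * (3 * x - 3)

theorem fallingCube_pos {x : ℝ} (hx : 2 ≤ x) : 0 < fallingCube x := by
  unfold fallingCube
  have : (0 : ℝ) < 3 * x - 3 := by linarith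
  have : (0 : ℝ) < 3 * x - 2 := by linarith
  have : (0 : ℝ) < 3 * x - 1 := by linarith
  positivity

theorem three_mul_pow_three_le_fallingCube {x : ℝ} (hx : 2 ≤ x) : 3 * x ^ 3 ≤ fallingCube x := by
  unfold fallingCube
  nlinarith [mul_nonneg (sub_nonneg.2 hx) (sq_nonneg x)]

def pairWeight (a b : ℝ) : ℝ := a * b * (3 * a * b * (a + b + 2) - 2 * (a + b) ^ 2)

theorem pairWeight_pos {a b : ℝ} (ha : 1 ≤ a) (hb : 1 ≤ b) : 0 < pairWeight a b := by
  have hab : a + b - 1 ≤ a * b := by nlinarith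
  unfold pairWeight
  have : 0 < 3 * a * b * (a + b + 2) - 2 * (a + b) ^ 2 := by nlinarith
  positivity

theorem pairWeight_le {a b : ℝ} (ha : 1 ≤ a) (hb : 1 ≤ b) :
    pairWeight a b ≤ 6 * a ^ 2 * b ^ 2 * (a + b) := by
  unfold pairWeight
  have hab : 0 < a * b := mul_pos (by linarith) (by linarith)
  nlinarith [mul_pos hab (sq_pos_of_pos (by linarith : 0 < a + b))]

theorem le_pairWeight_one {b : ℝ} (hb : 1 ≤ b) :
    fallingCube (b + 1) ≤ 27 * pairWeight 1 b := by
  unfold fallingCube pairWeight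
  nlinarith

theorem factorial_three_mul_sub_one {d : ℕ} (hd : 2 ≤ d) :
    ((3 * d - 1)! : ℝ) = fallingCube d * (3 * d - 4)! := by
  obtain ⟨e, rfl⟩ : ∃ e, d = e + 2 := ⟨d - 2, by omega⟩
  rw [show 3 * (e + 2) - 1 = 3 * e + 2 + 1 + 1 + 1 by omega,
    show 3 * (e + 2) - 4 = 3 * e + 2 by omega]
  simp only [Nat.factorial_succ, fallingCube]
  push_cast
  ring

theorem four_le_exp_two : (4 : ℝ) ≤ exp 2 := by
  have := add_one_le_exp (1 : ℝ)
  rw [show (2 : ℝ) = 1 + 1 by norm_num, exp_add]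
  nlinarith

theorem factorial_three_mul_sub_one_le (n : ℕ) : ((3 * n - 1)! : ℝ) ≤ 27 ^ n * n ^ (3 * n) := by
  have h : (3 * n - 1)! ≤ (3 * n) ^ (3 * n) :=
    (Nat.factorial_le (Nat.sub_le _ _)).trans (Nat.factorial_le_pow _)
  calc ((3 * n - 1)! : ℝ) ≤ ((3 * n : ℕ) : ℝ) ^ (3 * n) := by exact_mod_cast h
    _ = 27 ^ n * n ^ (3 * n) := by push_cast; rw [mul_pow, pow_mul]; norm_num

theorem le_exp_mul_factorial_three_mul_sub_one {n : ℕ} (hn : 1 ≤ n) :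
    27 ^ n * (n : ℝ) ^ (3 * n) ≤ exp (6 * n) * (3 * n - 1)! := by
  have hx : (0 : ℝ) ≤ 3 * n := by positivity
  have h := Real.pow_div_factorial_le_exp _ hx (3 * n)
  rw [div_le_iff₀ (by positivity)] at h
  have hfac : ((3 * n)! : ℝ) = 3 * n * (3 * n - 1)! := by
    rw [← Nat.mul_factorial_pred (by omega)]; push_cast; ring
  calc 27 ^ n * (n : ℝ) ^ (3 * n) = (3 * n) ^ (3 * n) := by rw [mul_pow, pow_mul (3 : ℝ)]; norm_num
    _ ≤ exp (3 * n) * (3 * n) * (3 * n - 1)! := by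
        rw [hfac] at h; linarith
    _ ≤ exp (3 * n) * exp (3 * n) * (3 * n - 1)! := by
        gcongr; linarith [add_one_le_exp (3 * n : ℝ)]
    _ = exp (6 * n) * (3 * n - 1)! := by rw [← exp_add]; ring_nf

theorem one_hundred_eight_le_exp_eight : (108 : ℝ) ≤ exp 8 := by
  have h := pow_le_pow_left₀ (by norm_num) four_le_exp_two 4
  rw [← exp_nat_mul] at h
  norm_num at h
  linarith

theorem abs_log_sub_log_le {x y c : ℝ} (hy : 0 < y) (h₁ : y ≤ exp c * x) (h₂ : x ≤ exp c * y) :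
    |log x - log y| ≤ c := by
  have hx : 0 < x := pos_of_mul_pos_right (hy.trans_le h₁) (exp_pos c).le
  have l₁ := log_le_log hy h₁
  have l₂ := log_le_log hx h₂
  rw [log_mul (exp_pos c).ne' hx.ne', log_exp] at l₁
  rw [log_mul (exp_pos c).ne' hy.ne', log_exp] at l₂
  rw [abs_sub_le_iff]
  constructor <;> linarith

structure IsKontsevichSeq (K : ℕ → ℤ) : Prop where
  one : K 1 = 1
  recursion : ∀ d : ℕ, 2 ≤ d → K d = ∑ a ∈ Ioo 0 d, K a * K (d - a) * kontsevichCoeff d a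

noncomputable def kontsevichRatio (K : ℕ → ℤ) (d : ℕ) : ℝ := K d / (3 * d - 1)!

theorem cast_eq_kontsevichRatio_mul_factorial (K : ℕ → ℤ) (n : ℕ) :
    (K n : ℝ) = kontsevichRatio K n * (3 * n - 1)! := by
  rw [kontsevichRatio, div_mul_cancel₀ _ (by positivity)]

namespace IsKontsevichSeq

variable {K : ℕ → ℤ}

theorem ratio_one (hK : IsKontsevichSeq K) : kontsevichRatio K 1 = 1 / 2 := by
  simp [kontsevichRatio, hK.one]

theorem ratio_rec (hK : IsKontsevichSeq K) {d : ℕ} (hd : 2 ≤ d) :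
    kontsevichRatio K d * fallingCube d =
      ∑ a ∈ Ioo 0 d, kontsevichRatio K a * kontsevichRatio K (d - a) *
        ((a : ℝ) ^ 2 * (d - a : ℕ) * (3 * (d - a : ℕ) - 1) * (2 * a - (d - a : ℕ))) := by
  have hK_eq := cast_eq_kontsevichRatio_mul_factorial K
  apply mul_left_cancel₀ (show ((3 * d - 4)! : ℝ) ≠ 0 by positivity)
  calc ((3 * d - 4)! : ℝ) * (kontsevichRatio K d * fallingCube d)
      = K d := by rw [hK_eq d, factorial_three_mul_sub_one hd]; ring
    _ = ∑ a ∈ Ioo 0 d, (K a : ℝ) * K (d - a) * kontsevichCoeff d a := by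
        rw [hK.recursion d hd]; push_cast; rfl
    _ = ∑ a ∈ Ioo 0 d, kontsevichRatio K a * kontsevichRatio K (d - a) *
          (((3 * a - 1)! * (3 * (d - a) - 1)! : ℝ) * kontsevichCoeff d a) := by
        refine sum_congr rfl fun a _ => ?_
        rw [hK_eq a, hK_eq (d - a)]; ring
    _ = _ := by
        rw [mul_sum]
        refine sum_congr rfl fun a ha => ?_
        rw [mem_Ioo] at ha
        rw [factorial_mul_kontsevichCoeff ha.1 ha.2]; ring

theorem two_mul_ratio_rec (hK : IsKontsevichSeq K) {d : ℕ} (hd : 2 ≤ d) :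
    2 * kontsevichRatio K d * fallingCube d =
      ∑ a ∈ Ioo 0 d,
        kontsevichRatio K a * kontsevichRatio K (d - a) * pairWeight a (d - a : ℕ) := by
  rw [mul_assoc, two_mul, hK.ratio_rec hd]
  nth_rw 2 [← sum_Ioo_reflect]
  rw [← sum_add_distrib]
  refine sum_congr rfl fun a ha => ?_
  rw [mem_Ioo] at ha
  rw [Nat.sub_sub_self ha.2.le, pairWeight]
  ring

theorem ratio_pos (hK : IsKontsevichSeq K) {d : ℕ} (hd : 1 ≤ d) : 0 < kontsevichRatio K d := by
  induction d using Nat.strong_induction_on with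
  | _ d ih =>
  obtain rfl | hd2 : d = 1 ∨ 2 ≤ d := by omega
  · rw [hK.ratio_one]; norm_num
  have hD : (2 : ℝ) ≤ d := by exact_mod_cast hd2
  have hsum : 0 < 2 * kontsevichRatio K d * fallingCube d := by
    rw [hK.two_mul_ratio_rec hd2]
    refine sum_pos (fun a ha => ?_) ⟨1, by simp only [mem_Ioo]; omega⟩
    rw [mem_Ioo] at ha
    have hb : 1 ≤ d - a := by omega
    exact mul_pos (mul_pos (ih a ha.2 ha.1) (ih (d - a) (by omega) hb))
      (pairWeight_pos (by exact_mod_cast ha.1) (by exact_mod_cast hb))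
  nlinarith [fallingCube_pos hD]

theorem ratio_le (hK : IsKontsevichSeq K) {d : ℕ} (hd : 1 ≤ d) :
    kontsevichRatio K d ≤ 4 ^ d / (8 * d ^ 4) := by
  induction d using Nat.strong_induction_on with
  | _ d ih =>
  obtain rfl | hd2 : d = 1 ∨ 2 ≤ d := by omega
  · rw [hK.ratio_one]; norm_num
  have hD : (2 : ℝ) ≤ d := by exact_mod_cast hd2
  have hterm : ∀ a ∈ Ioo 0 d,
      kontsevichRatio K a * kontsevichRatio K (d - a) * pairWeight a (d - a : ℕ) ≤
        4 ^ d * (3 * d / 32) * ((a : ℝ) ^ 2 * ((d - a : ℕ) : ℝ) ^ 2)⁻¹ := by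
    intro a ha
    rw [mem_Ioo] at ha
    have hb : 1 ≤ d - a := by omega
    have hA : (1 : ℝ) ≤ a := by exact_mod_cast ha.1
    have hB : (1 : ℝ) ≤ (d - a : ℕ) := by exact_mod_cast hb
    have hd_eq : (d : ℝ) = a + (d - a : ℕ) := by exact_mod_cast (Nat.add_sub_cancel' ha.2.le).symm
    calc kontsevichRatio K a * kontsevichRatio K (d - a) * pairWeight a (d - a : ℕ)
        ≤ 4 ^ a / (8 * a ^ 4) * (4 ^ (d - a) / (8 * (d - a : ℕ) ^ 4)) *
            (6 * a ^ 2 * ((d - a : ℕ) : ℝ) ^ 2 * (a + (d - a : ℕ))) := by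
          gcongr
          · exact (pairWeight_pos hA hB).le
          · exact (hK.ratio_pos hb).le
          · exact ih a ha.2 ha.1
          · exact ih (d - a) (by omega) hb
          · exact pairWeight_le hA hB
      _ = _ := by
          rw [← hd_eq, ← Nat.add_sub_cancel' ha.2.le, pow_add, Nat.add_sub_cancel_left]
          field_simp
          ring
  have hsum :
      2 * kontsevichRatio K d * fallingCube d ≤ 4 ^ d * (3 * d / 32) * (8 / (d : ℝ) ^ 2) := by
    rw [hK.two_mul_ratio_rec hd2]
    refine (sum_le_sum hterm).trans ?_
    rw [← mul_sum]
    gcongr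
    exact sum_Ioo_inv_sq_mul_inv_sq_le d
  have hN := (hK.ratio_pos (d := d) (by omega)).le
  rw [le_div_iff₀ (by positivity)]
  calc kontsevichRatio K d * (8 * d ^ 4)
      = 8 * d / 3 * (kontsevichRatio K d * (3 * d ^ 3)) := by ring
    _ ≤ 8 * d / 3 * (kontsevichRatio K d * fallingCube d) := by
        gcongr; exact three_mul_pow_three_le_fallingCube hD
    _ ≤ 8 * d / 3 * (4 ^ d * (3 * d / 32) * (8 / (d : ℝ) ^ 2) / 2) := by gcongr; linarith
    _ = 4 ^ d := by field_simp; ring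

theorem ratio_ge (hK : IsKontsevichSeq K) {d : ℕ} (hd : 1 ≤ d) :
    1 / 108 ^ d ≤ kontsevichRatio K d := by
  induction d, hd using Nat.le_induction with
  | base => rw [hK.ratio_one]; norm_num
  | succ d hd ih =>
  have hD : (1 : ℝ) ≤ d := by exact_mod_cast hd
  have hsingle : kontsevichRatio K 1 * kontsevichRatio K d * pairWeight 1 d ≤
      2 * kontsevichRatio K (d + 1) * fallingCube (d + 1 : ℕ) := by
    rw [hK.two_mul_ratio_rec (by omega)]
    refine single_le_sum (f := fun a => kontsevichRatio K a * kontsevichRatio K (d + 1 - a) *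
      pairWeight a (d + 1 - a : ℕ)) (fun a ha => ?_) (show 1 ∈ Ioo 0 (d + 1) by simp; omega)
      |>.trans_eq' (by simp)
    rw [mem_Ioo] at ha
    have hb : 1 ≤ d + 1 - a := by omega
    exact (mul_pos (mul_pos (hK.ratio_pos ha.1) (hK.ratio_pos hb))
      (pairWeight_pos (by exact_mod_cast ha.1) (by exact_mod_cast hb))).le
  have hw := le_pairWeight_one hD
  rw [hK.ratio_one] at hsingle
  push_cast at hsingle
  have hP := fallingCube_pos (by linarith : (2 : ℝ) ≤ d + 1)
  refine le_of_mul_le_mul_right ?_ hP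
  calc 1 / 108 ^ (d + 1) * fallingCube (d + 1)
      = 1 / 108 ^ d * fallingCube (d + 1) / 108 := by rw [pow_succ]; field_simp
    _ ≤ kontsevichRatio K d * (27 * pairWeight 1 d) / 108 := by
        gcongr
        exact (hK.ratio_pos hd).le
    _ ≤ _ := by linarith

theorem le_exp_mul_pow (hK : IsKontsevichSeq K) {n : ℕ} (hn : 1 ≤ n) :
    (K n : ℝ) ≤ exp (8 * n) * n ^ (3 * n) := by
  have hN : kontsevichRatio K n ≤ 4 ^ n := by
    refine (hK.ratio_le hn).trans (div_le_self (by positivity) ?_)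
    have : (1 : ℝ) ≤ n := by exact_mod_cast hn
    nlinarith [one_le_pow₀ (n := 4) this]
  calc (K n : ℝ) = kontsevichRatio K n * (3 * n - 1)! := cast_eq_kontsevichRatio_mul_factorial K n
    _ ≤ 4 ^ n * (27 ^ n * n ^ (3 * n)) :=
        mul_le_mul hN (factorial_three_mul_sub_one_le n) (by positivity) (by positivity)
    _ = 108 ^ n * n ^ (3 * n) := by rw [← mul_assoc, ← mul_pow]; norm_num
    _ ≤ exp 8 ^ n * n ^ (3 * n) := by gcongr; exact one_hundred_eight_le_exp_eight
    _ = exp (8 * n) * n ^ (3 * n) := by rw [← exp_nat_mul, mul_comm (n : ℝ)]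

theorem pow_le_exp_mul (hK : IsKontsevichSeq K) {n : ℕ} (hn : 1 ≤ n) :
    (n : ℝ) ^ (3 * n) ≤ exp (8 * n) * K n := by
  have hK_eq := cast_eq_kontsevichRatio_mul_factorial K n
  have hfac : ((3 * n - 1)! : ℝ) ≤ 108 ^ n * K n := by
    have := hK.ratio_ge hn
    rw [div_le_iff₀ (by positivity)] at this
    rw [hK_eq]
    nlinarith [(by positivity : (0 : ℝ) < (3 * n - 1)!)]
  have hKn : (0 : ℝ) ≤ K n := by rw [hK_eq]; exact mul_nonneg (hK.ratio_pos hn).le (by positivity)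
  calc (n : ℝ) ^ (3 * n) = 27 ^ n * n ^ (3 * n) / 27 ^ n := by field_simp
    _ ≤ exp (6 * n) * (3 * n - 1)! / 27 ^ n :=
        div_le_div_of_nonneg_right (le_exp_mul_factorial_three_mul_sub_one hn) (by positivity)
    _ ≤ exp (6 * n) * (108 ^ n * K n) / 27 ^ n := by gcongr
    _ = exp (6 * n) * 4 ^ n * K n := by
        rw [show (108 : ℝ) ^ n = 4 ^ n * 27 ^ n by rw [← mul_pow]; norm_num]; field_simp
    _ ≤ exp (6 * n) * exp 2 ^ n * K n := by gcongr; exact four_le_exp_two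
    _ = exp (8 * n) * K n := by rw [← exp_nat_mul, ← exp_add]; ring_nf

end IsKontsevichSeq

/-- If `K : ℕ → ℤ` is the sequence of Kontsevich numbers, then there
is a constant `C > 0` with `|log (K n) - 3 n log n| ≤ C n` for all `n ≥ 1`, i.e.
`log (K n) = 3 n log n + O(n)`. -/
theorem kontsevich_log_asymptotics
    (K : ℕ → ℤ)
    (hK1 : K 1 = 1)
    (hKrec : ∀ d : ℕ, 2 ≤ d →
      K d = ∑ d₁ ∈ Finset.Ioo 0 d,
        K d₁ * K (d - d₁) *
          ((d₁ : ℤ)^2 * ((d - d₁ : ℕ) : ℤ)^2 * (Nat.choose (3*d - 4) (3*d₁ - 2) : ℤ)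
            - (d₁ : ℤ)^3 * ((d - d₁ : ℕ) : ℤ) * (Nat.choose (3*d - 4) (3*d₁ - 1) : ℤ))) :
    ∃ C : ℝ, 0 < C ∧ ∀ n : ℕ, 1 ≤ n →
      |Real.log (K n) - 3 * n * Real.log n| ≤ C * n := by
  have hK : IsKontsevichSeq K := ⟨hK1, hKrec⟩
  refine ⟨8, by norm_num, fun n hn => ?_⟩
  have hpow : (0 : ℝ) < (n : ℝ) ^ (3 * n) := by positivity
  have hlog : Real.log ((n : ℝ) ^ (3 * n)) = 3 * n * Real.log n := by
    rw [Real.log_pow]; push_cast; ring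
  rw [← hlog]
  exact abs_log_sub_log_le hpow (hK.pow_le_exp_mul hn) (hK.le_exp_mul_pow hn)
end
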